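/- arXiv:2010.08673 — 2 statements merged into one kernel-verified Lean document; each statement's English description precedes it below -/
import Mathlib

section
/- Let 𝕏 ∈ ℝ^{n×p} and 𝕐 ∈ ℝ^{n×q} be matrices with 𝕏ᵀ𝕏 and 𝕐ᵀ𝕐 positive definite, and let 1 ≤ s_x ≤ p and 1 ≤ s_y ≤ q. For nonempty index sets K ⊆ {1,…,p} and J ⊆ {1,…,q}, let 𝕏_K and 𝕐_J denote the corresponding column submatrices (whose Gram matrices are automatically positive definite), and let C_{J,K} = C(𝕐_J, 𝕏_K) be the sample coherence matrix of these submatrices. Then max over all nonempty K, J with |K| ≤ s_x and |J| ≤ s_y of ‖C_{J,K}‖_F equals the max over all K, J with |K| = s_x and |J| = s_y of ‖C_{J,K}‖_F. -/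
open Matrix

noncomputable section

/-- Squared Frobenius norm of a real matrix: `‖M‖_F² = tr (M Mᵀ)`. -/
def frobSq {m n : Type*} [Fintype m] [Fintype n] (M : Matrix m n ℝ) : ℝ :=
  Matrix.trace (M * Mᵀ)

/-- Frobenius norm of a real matrix. -/
def frobNorm {m n : Type*} [Fintype m] [Fintype n] (M : Matrix m n ℝ) : ℝ :=
  Real.sqrt (frobSq M)

open Classical in
/-- `A^{-1/2}`: the inverse of the unique positive definite square root of a positive
definite matrix `A` (junk value `0` if `A` is not positive definite). -/
def invSqrt {n : Type*} [Fintype n] [DecidableEq n] (A : Matrix n n ℝ) : Matrix n n ℝ :=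
  if h : A.PosDef then
    ((h.posSemidef.1.eigenvectorUnitary : Matrix n n ℝ) *
      diagonal ((↑) ∘ (h.posSemidef.1.eigenvalues · |>.sqrt)) *
      (star h.posSemidef.1.eigenvectorUnitary : Matrix n n ℝ))⁻¹ else 0

/-- The sample coherence matrix `C(𝕐,𝕏) = n⁻¹ S_Y^{-1/2} 𝕐ᵀ 𝕏 S_X^{-1/2}`, where
`S_X = 𝕏ᵀ𝕏/n` and `S_Y = 𝕐ᵀ𝕐/n`. -/
def coh {ν a b : Type*} [Fintype ν] [Fintype a] [Fintype b] [DecidableEq a] [DecidableEq b]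
    (N : ℕ) (Y : Matrix ν b ℝ) (X : Matrix ν a ℝ) : Matrix b a ℝ :=
  (N : ℝ)⁻¹ • (invSqrt ((N : ℝ)⁻¹ • (Yᵀ * Y)) * Yᵀ * X * invSqrt ((N : ℝ)⁻¹ • (Xᵀ * X)))

/-- The matrix obtained from `X` by appending the vector `z` as an extra column. -/
def appendCol {ν a : Type*} (X : Matrix ν a ℝ) (z : ν → ℝ) : Matrix ν (a ⊕ Unit) ℝ :=
  Matrix.of fun i => Sum.elim (X i) fun _ => z i

/-- A vector viewed as a one-column matrix. -/
def colM {ν : Type*} (z : ν → ℝ) : Matrix ν Unit ℝ :=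
  Matrix.of fun i _ => z i

/-- The least-squares residual of `z` regressed on the columns of `X`:
`r = z − X (XᵀX)⁻¹ Xᵀ z`. -/
def resid {ν a : Type*} [Fintype ν] [Fintype a] [DecidableEq a]
    (X : Matrix ν a ℝ) (z : ν → ℝ) : ν → ℝ :=
  z - (X * (Xᵀ * X)⁻¹ * Xᵀ).mulVec z

/-!
Up to the normalisation by `n`, which cancels, `‖C(𝕐, 𝕏)‖_F² = tr (P_𝕏 P_𝕐)`, where
`P_𝕏 = 𝕏 (𝕏ᵀ𝕏)⁻¹ 𝕏ᵀ` is the orthogonal projection onto the column space of `𝕏`. Deleting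
columns shrinks the column space, so the projection decreases in the Loewner order, and
`A ↦ tr (A Q)` is monotone for `Q ⪰ 0`. Hence `‖C_{J,K}‖_F` is monotone under inclusion of `K`
and `J`, and every pair of index sets of cardinality at most `(s_x, s_y)` extends to one of
cardinality exactly `(s_x, s_y)` without decreasing the norm.
-/

open scoped MatrixOrder

section InvSqrt

variable {m : Type*} [Fintype m] [DecidableEq m] {A : Matrix m m ℝ}

theorem invSqrt_eq_inv_sqrt (hA : A.PosDef) : invSqrt A = (CFC.sqrt A)⁻¹ := by
  rw [invSqrt, dif_pos hA, CFC.sqrt_eq_real_sqrt A hA.posSemidef.nonneg, cfcₙ_eq_cfc,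
    hA.posSemidef.1.cfc_eq, IsHermitian.cfc, Unitary.conjStarAlgAut_apply]
  rfl

theorem transpose_invSqrt (hA : A.PosDef) : (invSqrt A)ᵀ = invSqrt A := by
  rw [invSqrt_eq_inv_sqrt hA, ← conjTranspose_eq_transpose_of_trivial,
    conjTranspose_nonsing_inv, ← star_eq_conjTranspose, (CFC.sqrt_nonneg A).isSelfAdjoint.star_eq]

theorem invSqrt_mul_invSqrt (hA : A.PosDef) : invSqrt A * invSqrt A = A⁻¹ := by
  rw [invSqrt_eq_inv_sqrt hA, ← Matrix.mul_inv_rev, CFC.sqrt_mul_sqrt_self A hA.posSemidef.nonneg]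

end InvSqrt

/-- The orthogonal projection onto the column space of `X` (the hat matrix). -/
def colProj {ν a : Type*} [Fintype ν] [Fintype a] [DecidableEq a] (X : Matrix ν a ℝ) :
    Matrix ν ν ℝ :=
  X * (Xᵀ * X)⁻¹ * Xᵀ

section ColProj

variable {ν a : Type*} [Fintype ν] [Fintype a] [DecidableEq a]

theorem transpose_colProj (X : Matrix ν a ℝ) : (colProj X)ᵀ = colProj X := by
  rw [colProj, transpose_mul, transpose_mul, transpose_transpose, transpose_nonsing_inv,
    transpose_mul, transpose_transpose, Matrix.mul_assoc]

theorem colProj_mul_self {X : Matrix ν a ℝ} (hX : IsUnit (Xᵀ * X)) :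
    colProj X * X = X := by
  rw [colProj, Matrix.mul_assoc, Matrix.mul_assoc,
    Matrix.nonsing_inv_mul _ ((isUnit_iff_isUnit_det _).1 hX), Matrix.mul_one]

theorem mul_colProj {ν' : Type*} (M : Matrix ν' ν ℝ) (X : Matrix ν a ℝ) :
    M * colProj X = M * X * (Xᵀ * X)⁻¹ * Xᵀ := by
  rw [colProj, ← Matrix.mul_assoc, ← Matrix.mul_assoc]

theorem isStarProjection_colProj {X : Matrix ν a ℝ} (hX : IsUnit (Xᵀ * X)) :
    IsStarProjection (colProj X) where
  isIdempotentElem := by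
    rw [IsIdempotentElem, mul_colProj, colProj_mul_self hX, colProj]
  isSelfAdjoint := by
    rw [IsSelfAdjoint, star_eq_conjTranspose, conjTranspose_eq_transpose_of_trivial,
      transpose_colProj]

theorem colProj_mul_submatrix {k : Type*} {X : Matrix ν a ℝ} (hX : IsUnit (Xᵀ * X))
    (e : k → a) :
    colProj X * X.submatrix id e = X.submatrix id e := by
  rw [← submatrix_id_id (colProj X), ← submatrix_mul _ _ _ _ _ Function.bijective_id,
    colProj_mul_self hX]

theorem colProj_submatrix_le {k : Type*} [Fintype k] [DecidableEq k] {X : Matrix ν a ℝ}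
    (hX : IsUnit (Xᵀ * X)) {e : k → a} (he : IsUnit ((X.submatrix id e)ᵀ * X.submatrix id e)) :
    colProj (X.submatrix id e) ≤ colProj X :=
  (isStarProjection_colProj he).le_of_mul_eq_right (isStarProjection_colProj hX) <| by
    rw [mul_colProj, colProj_mul_submatrix hX e, colProj]

end ColProj

theorem trace_mul_le_trace_mul_of_le {n : Type*} [Fintype n] [DecidableEq n]
    {A B Q : Matrix n n ℝ} (hAB : A ≤ B) (hQ : 0 ≤ Q) : (A * Q).trace ≤ (B * Q).trace := by
  have hconj : ∀ M : Matrix n n ℝ, (M * Q).trace = (CFC.sqrt Q * M * CFC.sqrt Q).trace := by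
    intro M
    rw [trace_mul_comm (CFC.sqrt Q * M), ← Matrix.mul_assoc, CFC.sqrt_mul_sqrt_self Q hQ,
      trace_mul_comm]
  rw [hconj, hconj, ← sub_nonneg, ← trace_sub]
  exact (sub_nonneg.2 <| (CFC.sqrt_nonneg Q).isSelfAdjoint.conjugate_le_conjugate hAB)
    |>.posSemidef.trace_nonneg

theorem Matrix.inv_smul_of_ne_zero {n K : Type*} [Fintype n] [DecidableEq n] [Field K] {c : K}
    (hc : c ≠ 0) {A : Matrix n n K} (hA : IsUnit A) : (c • A)⁻¹ = c⁻¹ • A⁻¹ :=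
  inv_smul' A (Units.mk0 c hc) ((isUnit_iff_isUnit_det A).1 hA)

theorem frobSq_smul {m n : Type*} [Fintype m] [Fintype n] (c : ℝ) (M : Matrix m n ℝ) :
    frobSq (c • M) = c ^ 2 * frobSq M := by
  rw [frobSq, frobSq, transpose_smul, Matrix.smul_mul, Matrix.mul_smul, smul_smul, trace_smul,
    smul_eq_mul, sq]

theorem frobSq_mul_mul_mul {ν a b : Type*} [Fintype ν] [Fintype a] [Fintype b]
    {R : Matrix b b ℝ} {S : Matrix a a ℝ} (hR : Rᵀ = R) (hS : Sᵀ = S)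
    (X : Matrix ν a ℝ) (Y : Matrix ν b ℝ) :
    frobSq (R * Yᵀ * X * S) = (X * (S * S) * Xᵀ * (Y * (R * R) * Yᵀ)).trace := by
  rw [frobSq, transpose_mul, transpose_mul, transpose_mul, hR, hS, transpose_transpose]
  simp only [Matrix.mul_assoc]
  rw [trace_mul_comm R]
  simp only [Matrix.mul_assoc]
  rw [trace_mul_comm Yᵀ]
  simp only [Matrix.mul_assoc]

theorem frobSq_coh {ν a b : Type*} [Fintype ν] [Fintype a] [Fintype b]
    [DecidableEq a] [DecidableEq b] {N : ℕ} (hN : N ≠ 0) {X : Matrix ν a ℝ} {Y : Matrix ν b ℝ}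
    (hX : (Xᵀ * X).PosDef) (hY : (Yᵀ * Y).PosDef) :
    frobSq (coh N Y X) = (colProj X * colProj Y).trace := by
  have hc : (0 : ℝ) < (N : ℝ)⁻¹ := by positivity
  have hX' := hX.smul hc
  have hY' := hY.smul hc
  rw [coh, frobSq_smul, frobSq_mul_mul_mul (transpose_invSqrt hY') (transpose_invSqrt hX'),
    invSqrt_mul_invSqrt hX', invSqrt_mul_invSqrt hY', inv_smul_of_ne_zero hc.ne' hX.isUnit,
    inv_smul_of_ne_zero hc.ne' hY.isUnit]
  simp only [Matrix.mul_smul, Matrix.smul_mul, trace_smul, smul_eq_mul, colProj]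
  field_simp

theorem transpose_submatrix_mul_submatrix {ν a k : Type*} [Fintype ν] (X : Matrix ν a ℝ)
    (e : k → a) : (X.submatrix id e)ᵀ * X.submatrix id e = (Xᵀ * X).submatrix e e := by
  rw [submatrix_mul _ _ _ _ _ Function.bijective_id, transpose_submatrix]

theorem frobNorm_coh_submatrix_le {ν a b k l : Type*} [Fintype ν] [Fintype a] [Fintype b]
    [Fintype k] [Fintype l] [DecidableEq a] [DecidableEq b] [DecidableEq k] [DecidableEq l]
    (N : ℕ) {X : Matrix ν a ℝ} {Y : Matrix ν b ℝ} (hX : (Xᵀ * X).PosDef) (hY : (Yᵀ * Y).PosDef)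
    {e : k → a} {f : l → b} (he : Function.Injective e) (hf : Function.Injective f) :
    frobNorm (coh N (Y.submatrix id f) (X.submatrix id e)) ≤ frobNorm (coh N Y X) := by
  classical
  rcases eq_or_ne N 0 with rfl | hN
  · simp [coh, frobNorm, frobSq]
  have hXe : ((X.submatrix id e)ᵀ * X.submatrix id e).PosDef := by
    rw [transpose_submatrix_mul_submatrix]; exact hX.submatrix he
  have hYf : ((Y.submatrix id f)ᵀ * Y.submatrix id f).PosDef := by
    rw [transpose_submatrix_mul_submatrix]; exact hY.submatrix hf
  refine Real.sqrt_le_sqrt ?_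
  rw [frobSq_coh hN hX hY, frobSq_coh hN hXe hYf]
  calc (colProj (X.submatrix id e) * colProj (Y.submatrix id f)).trace
      ≤ (colProj X * colProj (Y.submatrix id f)).trace :=
        trace_mul_le_trace_mul_of_le (colProj_submatrix_le hX.isUnit hXe.isUnit)
          (isStarProjection_colProj hYf.isUnit).nonneg
    _ = (colProj (Y.submatrix id f) * colProj X).trace := trace_mul_comm _ _
    _ ≤ (colProj Y * colProj X).trace :=
        trace_mul_le_trace_mul_of_le (colProj_submatrix_le hY.isUnit hYf.isUnit)
          (isStarProjection_colProj hX.isUnit).nonneg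
    _ = (colProj X * colProj Y).trace := trace_mul_comm _ _

theorem frobNorm_coh_mono {ν a b : Type*} [Fintype ν] [DecidableEq a] [DecidableEq b] (N : ℕ)
    {X : Matrix ν a ℝ} {Y : Matrix ν b ℝ} (hX : (Xᵀ * X).PosDef) (hY : (Yᵀ * Y).PosDef)
    {K K' : Finset a} {J J' : Finset b} (hK : K ⊆ K') (hJ : J ⊆ J') :
    frobNorm (coh N (Y.submatrix id ((↑) : J → b)) (X.submatrix id ((↑) : K → a))) ≤
      frobNorm (coh N (Y.submatrix id ((↑) : J' → b)) (X.submatrix id ((↑) : K' → a))) := by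
  have hXK' : ((X.submatrix id ((↑) : K' → a))ᵀ * X.submatrix id (↑)).PosDef := by
    rw [transpose_submatrix_mul_submatrix]; exact hX.submatrix Subtype.val_injective
  have hYJ' : ((Y.submatrix id ((↑) : J' → b))ᵀ * Y.submatrix id (↑)).PosDef := by
    rw [transpose_submatrix_mul_submatrix]; exact hY.submatrix Subtype.val_injective
  exact frobNorm_coh_submatrix_le N hXK' hYJ' (e := fun x : K => ⟨x, hK x.2⟩)
    (f := fun y : J => ⟨y, hJ y.2⟩) (fun _ _ h => Subtype.ext (Subtype.mk.inj h))
    (fun _ _ h => Subtype.ext (Subtype.mk.inj h))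

/-- The maximal sample root-Pillai trace `‖C_{J,K}‖_F` over nonempty column subsets of
cardinality at most `(s_x, s_y)` equals the maximum over subsets of cardinality exactly
`(s_x, s_y)` (equation (6) of the paper). -/
theorem max_coh_card_le_eq_max_coh_card_eq (n p q sx sy : ℕ)
    (X : Matrix (Fin n) (Fin p) ℝ) (Y : Matrix (Fin n) (Fin q) ℝ)
    (hX : (Xᵀ * X).PosDef) (hY : (Yᵀ * Y).PosDef)
    (hsx1 : 1 ≤ sx) (hsxp : sx ≤ p) (hsy1 : 1 ≤ sy) (hsyq : sy ≤ q) :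
    sSup {t : ℝ | ∃ (K : Finset (Fin p)) (J : Finset (Fin q)),
        K.Nonempty ∧ J.Nonempty ∧ K.card ≤ sx ∧ J.card ≤ sy ∧
        t = frobNorm (coh n (Y.submatrix id (fun j : {j // j ∈ J} => (j : Fin q)))
            (X.submatrix id (fun k : {k // k ∈ K} => (k : Fin p))))} =
      sSup {t : ℝ | ∃ (K : Finset (Fin p)) (J : Finset (Fin q)),
        K.card = sx ∧ J.card = sy ∧
        t = frobNorm (coh n (Y.submatrix id (fun j : {j // j ∈ J} => (j : Fin q)))
            (X.submatrix id (fun k : {k // k ∈ K} => (k : Fin p))))} := by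
  refine csSup_eq_csSup_of_forall_exists_le ?_ ?_
  · rintro t ⟨K, J, -, -, hK, hJ, rfl⟩
    obtain ⟨K', hKK', -, hK'⟩ :=
      Finset.exists_subsuperset_card_eq K.subset_univ hK (by simpa using hsxp)
    obtain ⟨J', hJJ', -, hJ'⟩ :=
      Finset.exists_subsuperset_card_eq J.subset_univ hJ (by simpa using hsyq)
    exact ⟨_, ⟨K', J', hK', hJ', rfl⟩, frobNorm_coh_mono n hX hY hKK' hJJ'⟩
  · rintro t ⟨K, J, hK, hJ, rfl⟩
    exact ⟨_, ⟨K, J, Finset.card_pos.1 (by omega), Finset.card_pos.1 (by omega), hK.le, hJ.le,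
      rfl⟩, le_rfl⟩
end
end

section
/- Let A ∈ ℝ^{p×p} and B ∈ ℝ^{q×q} be symmetric positive definite, let u ∈ ℝ^p, v ∈ ℝ^q, and L ∈ ℝ^{q×p}. Let Λ : (0,1] → ℝ^{q×p} be a family of matrices with Λ_t ≠ 0 for each t, Λ_t → 0 as t → 0⁺, and Λ_t/‖Λ_t‖_F → L as t → 0⁺ (in Frobenius norm). Then, as t → 0⁺, (2‖Λ_t‖_F)^{-1} [ −uᵀ A^{-1/2} Λ_tᵀ Λ_t A^{-1/2} u − vᵀ B^{-1/2} Λ_t Λ_tᵀ B^{-1/2} v + 2 vᵀ B^{-1/2} Λ_t A^{-1/2} u ] → vᵀ B^{-1/2} L A^{-1/2} u. -/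
open Matrix Filter Topology

/-!
Write `Λ_t = ‖Λ_t‖_F • M_t`, so that `M_t → L`. The bracket is a quadratic form in `Λ_t` plus twice
a linear form in `Λ_t`; after division by `2‖Λ_t‖_F` it becomes `(‖Λ_t‖_F / 2) Q(M_t) + ℓ(M_t)`,
whose quadratic part vanishes in the limit because `‖Λ_t‖_F → 0`.
-/

noncomputable section

open scoped ComplexOrder in
/-- The square root of a positive semidefinite matrix, as defined in the older Mathlib
(`Matrix.PosSemidef.sqrt`, since removed). -/
def Matrix.PosSemidef.sqrt {n 𝕜 : Type*} [Fintype n] [RCLike 𝕜] [DecidableEq n]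
    {A : Matrix n n 𝕜} (hA : A.PosSemidef) : Matrix n n 𝕜 :=
  hA.1.eigenvectorUnitary.1 * diagonal ((↑) ∘ (√·) ∘ hA.1.eigenvalues) *
  (star hA.1.eigenvectorUnitary : Matrix n n 𝕜)

section Frobenius

variable {m n : Type*} [Fintype m] [Fintype n]

lemma frobSq_eq_sum (M : Matrix m n ℝ) : frobSq M = ∑ i, ∑ j, M i j ^ 2 := by
  simp [frobSq, Matrix.trace, Matrix.mul_apply, sq]

lemma abs_apply_le_frobNorm (M : Matrix m n ℝ) (i : m) (j : n) : |M i j| ≤ frobNorm M := by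
  rw [frobNorm, ← Real.sqrt_sq_eq_abs, frobSq_eq_sum]
  gcongr
  calc M i j ^ 2 ≤ ∑ j', M i j' ^ 2 :=
        Finset.single_le_sum (fun _ _ => sq_nonneg _) (Finset.mem_univ j)
    _ ≤ ∑ i', ∑ j', M i' j' ^ 2 :=
        Finset.single_le_sum (f := fun i' => ∑ j', M i' j' ^ 2)
          (fun _ _ => Finset.sum_nonneg fun _ _ => sq_nonneg _) (Finset.mem_univ i)

lemma frobNorm_pos {M : Matrix m n ℝ} (hM : M ≠ 0) : 0 < frobNorm M := by
  refine (Real.sqrt_nonneg _).lt_of_ne fun h => hM ?_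
  ext i j
  have hij := abs_apply_le_frobNorm M i j
  rw [frobNorm, ← h] at hij
  simpa using abs_nonpos_iff.1 hij

lemma tendsto_of_tendsto_frobNorm_sub {α : Type*} {l : Filter α} {f : α → Matrix m n ℝ}
    {L : Matrix m n ℝ} (h : Tendsto (fun a => frobNorm (f a - L)) l (𝓝 0)) :
    Tendsto f l (𝓝 L) := by
  refine tendsto_pi_nhds.2 fun i => tendsto_pi_nhds.2 fun j => ?_
  rw [tendsto_iff_dist_tendsto_zero]
  exact squeeze_zero (fun _ => dist_nonneg) (fun a => abs_apply_le_frobNorm (f a - L) i j) h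

end Frobenius

lemma tendsto_inv_mul_quadratic_add_linear {α E : Type*} [TopologicalSpace E] [MulAction ℝ E]
    {l : Filter α} {Q ℓ : E → ℝ} (hQ : Continuous Q) (hℓ : Continuous ℓ)
    (hQ_smul : ∀ (c : ℝ) x, Q (c • x) = c ^ 2 * Q x) (hℓ_smul : ∀ (c : ℝ) x, ℓ (c • x) = c * ℓ x)
    {n : α → ℝ} {Λ : α → E} {L : E} (hn : Tendsto n l (𝓝 0)) (hn_ne : ∀ᶠ a in l, n a ≠ 0)
    (hΛ : Tendsto (fun a => (n a)⁻¹ • Λ a) l (𝓝 L)) :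
    Tendsto (fun a => (2 * n a)⁻¹ * (Q (Λ a) + 2 * ℓ (Λ a))) l (𝓝 (ℓ L)) := by
  have hlim : Tendsto (fun a => n a / 2 * Q ((n a)⁻¹ • Λ a) + ℓ ((n a)⁻¹ • Λ a)) l
      (𝓝 (0 / 2 * Q L + ℓ L)) :=
    ((hn.div_const 2).mul ((hQ.tendsto L).comp hΛ)).add ((hℓ.tendsto L).comp hΛ)
  rw [zero_div, zero_mul, zero_add] at hlim
  refine hlim.congr' (hn_ne.mono fun a ha => ?_)
  have hΛa : Λ a = n a • (n a)⁻¹ • Λ a := (smul_inv_smul₀ ha _).symm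
  generalize (n a)⁻¹ • Λ a = M at hΛa ⊢
  simp only [hΛa, hQ_smul, hℓ_smul]
  field_simp

/-- Continuous extension of the canonical gradient of the root-Pillai trace to the null
(equation (7) of the paper): if `Λ_t ≠ 0` on `(0,1]`, `Λ_t → 0` and `Λ_t/‖Λ_t‖_F → L` in
Frobenius norm as `t → 0⁺`, then the canonical gradient of the Pillai trace along the family,
divided by `2‖Λ_t‖_F`, converges as `t → 0⁺` to `vᵀ B^{-1/2} L A^{-1/2} u`. -/
theorem root_pillai_gradient_null_limit (p q : ℕ)
    (A : Matrix (Fin p) (Fin p) ℝ) (B : Matrix (Fin q) (Fin q) ℝ)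
    (hA : A.PosDef) (hB : B.PosDef)
    (u : Fin p → ℝ) (v : Fin q → ℝ) (L : Matrix (Fin q) (Fin p) ℝ)
    (Λ : ℝ → Matrix (Fin q) (Fin p) ℝ)
    (hne : ∀ t ∈ Set.Ioc (0 : ℝ) 1, Λ t ≠ 0)
    (hto0 : Tendsto (fun t => frobNorm (Λ t)) (𝓝[>] (0 : ℝ)) (𝓝 0))
    (hnorm : Tendsto (fun t => frobNorm ((frobNorm (Λ t))⁻¹ • Λ t - L))
      (𝓝[>] (0 : ℝ)) (𝓝 0)) :
    Tendsto (fun t => (2 * frobNorm (Λ t))⁻¹ *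
        (-(u ⬝ᵥ (((hA.posSemidef.sqrt)⁻¹ * (Λ t)ᵀ * Λ t * (hA.posSemidef.sqrt)⁻¹).mulVec u))
          - (v ⬝ᵥ (((hB.posSemidef.sqrt)⁻¹ * Λ t * (Λ t)ᵀ * (hB.posSemidef.sqrt)⁻¹).mulVec v))
          + 2 * (v ⬝ᵥ (((hB.posSemidef.sqrt)⁻¹ * Λ t * (hA.posSemidef.sqrt)⁻¹).mulVec u))))
      (𝓝[>] (0 : ℝ))
      (𝓝 (v ⬝ᵥ (((hB.posSemidef.sqrt)⁻¹ * L * (hA.posSemidef.sqrt)⁻¹).mulVec u))) := by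
  set S := (hA.posSemidef.sqrt)⁻¹
  set R := (hB.posSemidef.sqrt)⁻¹
  have hne_eventually : ∀ᶠ t in 𝓝[>] (0 : ℝ), frobNorm (Λ t) ≠ 0 := by
    filter_upwards [Ioc_mem_nhdsGT (zero_lt_one' ℝ)] with t ht
    exact (frobNorm_pos (hne t ht)).ne'
  set Q : Matrix (Fin q) (Fin p) ℝ → ℝ := fun X =>
    -(u ⬝ᵥ (S * Xᵀ * X * S).mulVec u) - v ⬝ᵥ (R * X * Xᵀ * R).mulVec v
  set ℓ : Matrix (Fin q) (Fin p) ℝ → ℝ := fun X => v ⬝ᵥ (R * X * S).mulVec u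
  have hQ_smul (c : ℝ) (X) : Q (c • X) = c ^ 2 * Q X := by
    simp only [Q, transpose_smul, Matrix.mul_smul, smul_mul, smul_mulVec, dotProduct_smul]
    ring
  have hℓ_smul (c : ℝ) (X) : ℓ (c • X) = c * ℓ X := by
    simp [ℓ, smul_mulVec]
  exact tendsto_inv_mul_quadratic_add_linear (by fun_prop) (by fun_prop) hQ_smul hℓ_smul hto0
    hne_eventually (tendsto_of_tendsto_frobNorm_sub hnorm)
end
end
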